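/- Let γ ∈ (0,1), q ∈ (0, 1/2), n ≥ 1, and let X_1, …, X_n be independent standard normal random variables on a probability space (Ω, P). Then P(∑_{i=1}^n (q + X_i) > √n · Φ⁻¹(1 − γ)) = 1 − Φ(Φ⁻¹(1 − γ) − q√n) > γ. Hence the constant interference sequence Δ_i = q (which satisfies |Δ_i| ≤ q) makes the false alarm probability of the n-dimensional Neyman–Pearson test with size γ strictly exceed γ; in particular, the selectivity of the Neyman–Pearson test contains no q > 0. -/

import Mathlib

open MeasureTheory ProbabilityTheory Real Filter

/-- The cumulative distribution function `Φ` of the standard normal law `N(0,1)`. -/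
noncomputable def Phi (x : ℝ) : ℝ := ((gaussianReal 0 1) (Set.Iic x)).toReal

/-- The inverse `Φ⁻¹` of the standard normal cdf (on `(0,1)`). -/
noncomputable def PhiInv (y : ℝ) : ℝ := Function.invFun Phi y

open scoped NNReal

/-!
A sum of `n` independent standard normals is `N(0, n)`, so after rescaling by `√n` the event
`∑ (q + X i) > √n Φ⁻¹(1 - γ)` is the tail `Z > Φ⁻¹(1 - γ) - q√n` of a standard normal `Z`.
Since `Φ` is a strictly increasing bijection onto `(0, 1)` and `q√n > 0`, this tail has
probability `1 - Φ(Φ⁻¹(1 - γ) - q√n) > 1 - Φ(Φ⁻¹(1 - γ)) = γ`.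
-/

lemma Phi_eq_cdf : Phi = cdf (gaussianReal 0 1) := by
  ext x
  rw [cdf_eq_real, measureReal_def, Phi]

lemma Phi_eq_integral (x : ℝ) : Phi x = ∫ t in Set.Iic x, gaussianPDFReal 0 1 t := by
  rw [Phi, gaussianReal_of_var_ne_zero 0 one_ne_zero, withDensity_apply _ measurableSet_Iic,
    gaussianPDF_def, ← ofReal_integral_eq_lintegral_ofReal
      (integrable_gaussianPDFReal 0 1).integrableOn (ae_of_all _ (gaussianPDFReal_nonneg 0 1)),
    ENNReal.toReal_ofReal (integral_nonneg (gaussianPDFReal_nonneg 0 1))]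

lemma Phi_sub_Phi (x y : ℝ) : Phi y - Phi x = ∫ t in x..y, gaussianPDFReal 0 1 t := by
  rw [Phi_eq_integral, Phi_eq_integral]
  exact intervalIntegral.integral_Iic_sub_Iic (integrable_gaussianPDFReal 0 1).integrableOn
    (integrable_gaussianPDFReal 0 1).integrableOn

lemma continuous_Phi : Continuous Phi := by
  have hPhi : Phi = fun x ↦ Phi 0 + ∫ t in (0 : ℝ)..x, gaussianPDFReal 0 1 t := by
    ext x
    rw [← Phi_sub_Phi, add_sub_cancel]
  rw [hPhi]
  exact continuous_const.add ((integrable_gaussianPDFReal 0 1).continuous_primitive 0)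

lemma strictMono_Phi : StrictMono Phi := by
  intro x y hxy
  rw [← sub_pos, Phi_sub_Phi]
  exact intervalIntegral.intervalIntegral_pos_of_pos_on
    (integrable_gaussianPDFReal 0 1).intervalIntegrable
    (fun t _ ↦ gaussianPDFReal_pos 0 1 t one_ne_zero) hxy

lemma Phi_PhiInv {y : ℝ} (hy : y ∈ Set.Ioo (0 : ℝ) 1) : Phi (PhiInv y) = y := by
  refine Function.invFun_eq (mem_range_of_exists_le_of_exists_ge continuous_Phi ?_ ?_)
  · rw [Phi_eq_cdf]
    exact ((tendsto_cdf_atBot _).eventually_le_const hy.1).exists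
  · rw [Phi_eq_cdf]
    exact ((tendsto_cdf_atTop _).eventually_const_le hy.2).exists

lemma gaussianReal_Ioi (x : ℝ) : gaussianReal 0 1 (Set.Ioi x) = ENNReal.ofReal (1 - Phi x) := by
  rw [← Set.compl_Iic, prob_compl_eq_one_sub measurableSet_Iic, Phi_eq_cdf,
    ENNReal.ofReal_sub _ (cdf_nonneg _ x), ofReal_cdf, ENNReal.ofReal_one]

lemma gaussianReal_Ioi_sqrt_mul {v : ℝ≥0} (hv : v ≠ 0) (x : ℝ) :
    gaussianReal 0 v (Set.Ioi (√v * x)) = gaussianReal 0 1 (Set.Ioi x) := by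
  have hscale : (gaussianReal 0 1).map (√v * ·) = gaussianReal 0 v := by
    rw [gaussianReal_map_const_mul, mul_zero, mul_one]
    congr
    exact Real.sq_sqrt v.coe_nonneg
  have hpre : (√v * ·) ⁻¹' Set.Ioi (√v * x) = Set.Ioi x := by
    ext t
    simp [mul_lt_mul_iff_right₀ (Real.sqrt_pos.mpr (by positivity : (0 : ℝ) < v))]
  rw [← hscale, Measure.map_apply (measurable_const_mul _) measurableSet_Ioi, hpre]

lemma map_finsetSum_eq_gaussianReal {Ω ι : Type*} [MeasurableSpace Ω] {P : Measure Ω}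
    [IsProbabilityMeasure P] {X : ι → Ω → ℝ} {m : ι → ℝ} {v : ι → ℝ≥0}
    (hindep : iIndepFun X P) (hX : ∀ i, P.map (X i) = gaussianReal (m i) (v i))
    (s : Finset ι) :
    P.map (∑ i ∈ s, X i) = gaussianReal (∑ i ∈ s, m i) (∑ i ∈ s, v i) := by
  classical
  induction s using Finset.induction_on with
  | empty =>
    rw [Finset.sum_empty, Finset.sum_empty, Finset.sum_empty, gaussianReal_zero_var,
      show (0 : Ω → ℝ) = fun _ ↦ 0 from rfl, Measure.map_const, measure_univ, one_smul]
  | insert a s ha ih =>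
    have hmeas i : AEMeasurable (X i) P :=
      AEMeasurable.of_map_ne_zero (by simp [hX, NeZero.ne])
    simp only [Finset.sum_insert ha]
    exact gaussianReal_add_gaussianReal_of_indepFun
      (hindep.indepFun_finsetSum_of_notMem₀ hmeas ha).symm (hX a) ih

lemma measure_sqrt_mul_lt_sum_add {Ω : Type*} [MeasurableSpace Ω] {P : Measure Ω}
    [IsProbabilityMeasure P] {n : ℕ} (hn : 1 ≤ n) {X : Fin n → Ω → ℝ}
    (hindep : iIndepFun X P) (hX : ∀ i, P.map (X i) = gaussianReal 0 1) (q c : ℝ) :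
    P {ω | √n * c < ∑ i, (q + X i ω)} = ENNReal.ofReal (1 - Phi (c - q * √n)) := by
  have hsum : P.map (∑ i, X i) = gaussianReal 0 n := by
    simpa using map_finsetSum_eq_gaussianReal hindep hX Finset.univ
  have hn' : (n : ℝ≥0) ≠ 0 := by positivity
  have hset :
      {ω | √n * c < ∑ i, (q + X i ω)} = (∑ i, X i) ⁻¹' Set.Ioi (√n * (c - q * √n)) := by
    ext ω
    have hshift : √n * (c - q * √n) = √n * c - n * q := by
      linear_combination (-q) * Real.mul_self_sqrt n.cast_nonneg
    simp only [hshift, Set.mem_ofPred_eq, Set.mem_preimage, Set.mem_Ioi, Finset.sum_add_distrib,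
      Finset.sum_const, Finset.card_univ, Fintype.card_fin, nsmul_eq_mul, Finset.sum_apply]
    constructor <;> intro <;> linarith
  rw [hset, ← Measure.map_apply₀ (AEMeasurable.of_map_ne_zero (by simp [hsum, NeZero.ne]))
    measurableSet_Ioi.nullMeasurableSet, hsum]
  simpa using (gaussianReal_Ioi_sqrt_mul hn' _).trans (gaussianReal_Ioi _)

theorem stmt5_general {Ω : Type*} [MeasurableSpace Ω] (P : Measure Ω) [IsProbabilityMeasure P]
    (γ : ℝ) (hγ : γ ∈ Set.Ioo (0 : ℝ) 1) (q : ℝ) (hq : q ∈ Set.Ioo (0 : ℝ) (1/2))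
    (n : ℕ) (hn : 1 ≤ n)
    (X : Fin n → Ω → ℝ)
    (hindep : iIndepFun X P)
    (hdist : ∀ i, Measure.map (X i) P = gaussianReal 0 1) :
    P {ω | Real.sqrt n * PhiInv (1 - γ) < ∑ i, (q + X i ω)} =
        ENNReal.ofReal (1 - Phi (PhiInv (1 - γ) - q * Real.sqrt n)) ∧
      ENNReal.ofReal γ <
        P {ω | Real.sqrt n * PhiInv (1 - γ) < ∑ i, (q + X i ω)} := by
  have hlaw := measure_sqrt_mul_lt_sum_add hn hindep hdist q (PhiInv (1 - γ))
  refine ⟨hlaw, ?_⟩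
  have hshift : 0 < q * √n := mul_pos hq.1 (Real.sqrt_pos.mpr (by exact_mod_cast hn))
  have hΦ : Phi (PhiInv (1 - γ) - q * √n) < 1 - γ := by
    calc Phi (PhiInv (1 - γ) - q * √n) < Phi (PhiInv (1 - γ)) := strictMono_Phi (by linarith)
      _ = 1 - γ := Phi_PhiInv ⟨by linarith [hγ.2], by linarith [hγ.1]⟩
  rw [hlaw, ENNReal.ofReal_lt_ofReal_iff (by linarith [hγ.1])]
  linarith

/-- under the constant interference Δ_i = q with 0 < q < 1/2, the false
alarm probability of the n-dimensional Neyman–Pearson test with size γ equals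
1 - Φ(Φ⁻¹(1-γ) - q√n) and strictly exceeds γ. -/
theorem stmt5 {Ω : Type*} [MeasurableSpace Ω] (P : Measure Ω) [IsProbabilityMeasure P]
    (γ : ℝ) (hγ : γ ∈ Set.Ioo (0 : ℝ) 1) (q : ℝ) (hq : q ∈ Set.Ioo (0 : ℝ) (1/2))
    (n : ℕ) (hn : 1 ≤ n)
    (X : Fin n → Ω → ℝ) (hmeas : ∀ i, Measurable (X i))
    (hindep : iIndepFun X P)
    (hdist : ∀ i, Measure.map (X i) P = gaussianReal 0 1) :
    P {ω | Real.sqrt n * PhiInv (1 - γ) < ∑ i, (q + X i ω)} =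
        ENNReal.ofReal (1 - Phi (PhiInv (1 - γ) - q * Real.sqrt n)) ∧
      ENNReal.ofReal γ <
        P {ω | Real.sqrt n * PhiInv (1 - γ) < ∑ i, (q + X i ω)} :=
  stmt5_general P γ hγ q hq n hn X hindep hdist
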